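/- arXiv:1911.05452 — 4 statements merged into one kernel-verified Lean document; each statement's English description precedes it below -/
import Mathlib

section
/- If ũ : ℝ^n → ℝ is κ-uniformly convex (i.e. ũ(x) - (κ/2)‖x‖² is convex) with κ > 0, and 0 ∈ ∂ũ(0), then for every ȳ with ‖ȳ‖ < κ there exists b with ‖b‖ ≤ ‖ȳ‖/κ and ȳ ∈ ∂ũ(b). Consequently, the ball B_κ(0) is contained in the image ∂ũ(ℝ^n). -/
open scoped RealInnerProductSpace

def SubDiff {n : ℕ} (f : EuclideanSpace ℝ (Fin n) → ℝ) (a : EuclideanSpace ℝ (Fin n)) :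
    Set (EuclideanSpace ℝ (Fin n)) :=
  {y | ∀ x, f a + (inner ℝ y (x - a) : ℝ) ≤ f x}

/-!
Subtracting the subgradient inequality at `b` from strong convexity along the segment `[b, x]`
and letting the step tend to zero upgrades every subgradient inequality of a `κ`-strongly convex
function by the term `κ/2 ‖x - b‖²`. With `0 ∈ ∂ũ(0)` this gives quadratic growth of `ũ`, so
`ũ - ⟪ȳ, ·⟫` attains its minimum at some `b`, i.e. `ȳ ∈ ∂ũ(b)`; adding the upgraded inequalities
for the pairs `(0, 0)` and `(b, ȳ)` gives `κ ‖b‖² ≤ ⟪ȳ, b⟫ ≤ ‖ȳ‖ ‖b‖`.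
-/

open Filter Set Topology

section StrongConvexity

variable {E : Type*} [NormedAddCommGroup E] [InnerProductSpace ℝ E] {f : E → ℝ} {m : ℝ}

theorem StrongConvexOn.add_inner_add_sq_le (hf : StrongConvexOn univ m f) {a y : E}
    (hy : ∀ x, f a + ⟪y, x - a⟫ ≤ f x) (x : E) :
    f a + ⟪y, x - a⟫ + m / 2 * ‖x - a‖ ^ 2 ≤ f x := by
  have hstep : ∀ t ∈ Ioo (0 : ℝ) 1, ⟪y, x - a⟫ + (1 - t) * (m / 2 * ‖x - a‖ ^ 2) ≤ f x - f a := by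
    rintro t ⟨ht0, ht1⟩
    have hseg := hf.2 (mem_univ x) (mem_univ a) ht0.le (sub_nonneg.2 ht1.le) (add_sub_cancel t 1)
    have hsub := hy (t • x + (1 - t) • a)
    have hdir : t • x + (1 - t) • a - a = t • (x - a) := by module
    rw [hdir, real_inner_smul_right] at hsub
    simp only [smul_eq_mul] at hseg
    refine le_of_mul_le_mul_left ?_ ht0
    linarith
  have hlim : Tendsto (fun t : ℝ => ⟪y, x - a⟫ + (1 - t) * (m / 2 * ‖x - a‖ ^ 2)) (𝓝[>] 0)
      (𝓝 (⟪y, x - a⟫ + m / 2 * ‖x - a‖ ^ 2)) := by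
    refine tendsto_nhdsWithin_of_tendsto_nhds ?_
    have : Continuous fun t : ℝ => ⟪y, x - a⟫ + (1 - t) * (m / 2 * ‖x - a‖ ^ 2) := by fun_prop
    simpa using this.tendsto 0
  linarith [le_of_tendsto hlim (eventually_of_mem (Ioo_mem_nhdsGT one_pos) hstep)]

theorem StrongConvexOn.mul_sq_le_inner_sub (hf : StrongConvexOn univ m f) {a₁ a₂ y₁ y₂ : E}
    (hy₁ : ∀ x, f a₁ + ⟪y₁, x - a₁⟫ ≤ f x) (hy₂ : ∀ x, f a₂ + ⟪y₂, x - a₂⟫ ≤ f x) :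
    m * ‖a₁ - a₂‖ ^ 2 ≤ ⟪y₁ - y₂, a₁ - a₂⟫ := by
  have h₁ := hf.add_inner_add_sq_le hy₁ a₂
  have h₂ := hf.add_inner_add_sq_le hy₂ a₁
  rw [← neg_sub a₁ a₂, inner_neg_right, norm_neg] at h₁
  rw [inner_sub_left]
  linarith

theorem StrongConvexOn.continuous [FiniteDimensional ℝ E] (hf : StrongConvexOn univ m f) :
    Continuous f := by
  have hconv := continuousOn_univ.1 <| (strongConvexOn_iff_convex.1 hf).continuousOn isOpen_univ
  exact (hconv.add (by fun_prop : Continuous fun x : E => m / 2 * ‖x‖ ^ 2)).congr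
    fun x => sub_add_cancel _ _

end StrongConvexity

theorem exists_subgradient_of_quadratic_growth {E : Type*} [NormedAddCommGroup E]
    [InnerProductSpace ℝ E] [FiniteDimensional ℝ E] {f : E → ℝ} {c m : ℝ} (hf : Continuous f)
    (hm : 0 < m) (hgrowth : ∀ x, c + m * ‖x‖ ^ 2 ≤ f x) (y : E) :
    ∃ b, ∀ x, f b + ⟪y, x - b⟫ ≤ f x := by
  have hcoercive : Tendsto (fun r : ℝ => c + r * (m * r - ‖y‖)) atTop atTop :=
    tendsto_atTop_add_const_left _ _ <| tendsto_id.atTop_mul_atTop₀ <|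
      tendsto_atTop_add_const_right _ _ (tendsto_id.const_mul_atTop hm)
  have hlim : Tendsto (fun x => f x - ⟪y, x⟫) (cocompact E) atTop := by
    refine tendsto_atTop_mono (fun x => ?_) (hcoercive.comp tendsto_norm_cocompact_atTop)
    simp only [Function.comp_apply]
    linarith [real_inner_le_norm y x, hgrowth x]
  obtain ⟨b, hb⟩ := (show Continuous fun x => f x - ⟪y, x⟫ by fun_prop).exists_forall_le hlim
  refine ⟨b, fun x => ?_⟩
  rw [inner_sub_right]
  linarith [hb x]

theorem norm_le_div_of_mul_sq_le_inner {E : Type*} [NormedAddCommGroup E] [InnerProductSpace ℝ E]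
    {m : ℝ} {b y : E} (hm : 0 < m) (h : m * ‖b‖ ^ 2 ≤ ⟪y, b⟫) : ‖b‖ ≤ ‖y‖ / m := by
  rw [le_div_iff₀ hm]
  rcases (norm_nonneg b).eq_or_lt with hb | hb
  · rw [← hb, zero_mul]
    exact norm_nonneg y
  · nlinarith [real_inner_le_norm y b]

theorem slope_increasing_property {n : ℕ} (u : EuclideanSpace ℝ (Fin n) → ℝ) (κ : ℝ)
    (hκ : 0 < κ) (hconv : ConvexOn ℝ Set.univ (fun x => u x - κ / 2 * ‖x‖ ^ 2))
    (h0 : (0 : EuclideanSpace ℝ (Fin n)) ∈ SubDiff u 0) :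
    (∀ ybar : EuclideanSpace ℝ (Fin n), ‖ybar‖ < κ →
        ∃ b, ‖b‖ ≤ ‖ybar‖ / κ ∧ ybar ∈ SubDiff u b) ∧
      Metric.ball (0 : EuclideanSpace ℝ (Fin n)) κ ⊆ ⋃ x, SubDiff u x := by
  have hu := strongConvexOn_iff_convex.2 hconv
  have hgrowth : ∀ x, u 0 + κ / 2 * ‖x‖ ^ 2 ≤ u x := fun x => by
    simpa using hu.add_inner_add_sq_le h0 x
  have hsurj : ∀ ybar, ∃ b, ‖b‖ ≤ ‖ybar‖ / κ ∧ ybar ∈ SubDiff u b := fun ybar => by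
    obtain ⟨b, hb⟩ := exists_subgradient_of_quadratic_growth hu.continuous (half_pos hκ) hgrowth ybar
    refine ⟨b, norm_le_div_of_mul_sq_le_inner hκ ?_, hb⟩
    simpa using hu.mul_sq_le_inner_sub hb h0
  refine ⟨fun ybar _ => hsurj ybar, fun ybar _ => ?_⟩
  obtain ⟨b, -, hb⟩ := hsurj ybar
  exact mem_iUnion.2 ⟨b, hb⟩
end

section
/- Under the Lagrangian coordinate rotation by angle α, the arctangents of Hessian eigenvalues shift by α: if u is smooth with D²u > -cot(α)·I and ū is the α-rotated potential, then at corresponding points arctan λ̄ᵢ(D²ū) = arctan λᵢ(D²u) - α for each i. In particular, if u solves Σᵢ arctan λᵢ(D²u) = Θ, then ū solves Σᵢ arctan λ̄ᵢ(D²ū) = Θ - nα. -/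
/-!
The matrix `Ā = (cA - s)(c + sA)⁻¹` is the function `t ↦ (ct - s)/(c + st)` of the symmetric
matrix `A`, well defined because `A + cot α > 0` makes `c + sλ > 0` on the spectrum of `A`. Hence
the eigenvalues of `Ā` are the images of those of `A`, up to order, and
`(ct - s)/(c + st) = tan (arctan t - α)`, where `c + st > 0` is exactly what keeps
`arctan t - α` in `(-π/2, π/2)`.
-/

open Real in
theorem Real.arctan_sub_eq_arctan_div {α t : ℝ} (hα : α ∈ Set.Ioo (-(π / 2)) (π / 2))
    (h : 0 < cos α + sin α * t) :
    arctan ((cos α * t - sin α) / (cos α + sin α * t)) = arctan t - α := by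
  have hc : 0 < cos α := cos_pos_of_mem_Ioo hα
  have hprod : t * -tan α < 1 := by
    rw [tan_eq_sin_div_cos]
    field_simp
    linarith
  calc arctan ((cos α * t - sin α) / (cos α + sin α * t))
      = arctan ((t + -tan α) / (1 - t * -tan α)) := by
        rw [tan_eq_sin_div_cos]
        congr 1
        field_simp
        ring
    _ = arctan t - α := by
        rw [← arctan_add hprod, arctan_neg, arctan_tan hα.1 hα.2, sub_eq_add_neg]

theorem Fintype.exists_perm_of_map_univ_eq {ι α : Type*} [Fintype ι] (f g : ι → α)
    (h : Multiset.map f Finset.univ.val = Multiset.map g Finset.univ.val) :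
    ∃ σ : Equiv.Perm ι, ∀ i, f i = g (σ i) := by
  classical
  have hfiber : ∀ a, Fintype.card {i // f i = a} = Fintype.card {i // g i = a} := by
    intro a
    have := congrArg (Multiset.count a) h
    simp only [Multiset.count_map, Fintype.card_subtype, eq_comm (a := a)] at this ⊢
    exact this
  exact ⟨Equiv.ofFiberEquiv fun a => Fintype.equivOfCardEq (hfiber a),
    fun i => (Equiv.ofFiberEquiv_map _ i).symm⟩

namespace Matrix

variable {𝕜 n : Type*} [RCLike 𝕜] [Fintype n] [DecidableEq n] {A : Matrix n n 𝕜}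

open scoped MatrixOrder ComplexOrder in
theorem PosDef.add_pos_of_mem_spectrum {r x : ℝ} (h : (A + r • 1).PosDef)
    (hx : x ∈ spectrum ℝ A) : 0 < x + r := by
  refine h.isStrictlyPositive.spectrum_pos ?_
  rw [← Algebra.algebraMap_eq_smul_one, ← spectrum.add_singleton_eq]
  exact Set.add_mem_add hx rfl

namespace IsHermitian

theorem cfc_sub_div_add (hA : A.IsHermitian) {a b c d : ℝ}
    (h : ∀ x ∈ spectrum ℝ A, c + d * x ≠ 0) :
    cfc (fun x => (a * x - b) / (c + d * x)) A = (a • A - b • 1) * (c • 1 + d • A)⁻¹ := by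
  have hA' : IsSelfAdjoint A := hA
  rw [cfc_map_div _ _ A h, cfc_sub (fun x => a * x) (fun _ => b) A, cfc_const_mul_id a A,
    cfc_const b A, cfc_const_add c (fun x => d * x) A, cfc_const_mul_id d A,
    nonsing_inv_eq_ringInverse, Algebra.algebraMap_eq_smul_one, Algebra.algebraMap_eq_smul_one]

open Polynomial in
theorem exists_perm_eigenvalues_cfc (hA : A.IsHermitian) (f : ℝ → ℝ)
    (hB : (cfc f A).IsHermitian) :
    ∃ σ : Equiv.Perm n, ∀ i, hB.eigenvalues i = f (hA.eigenvalues (σ i)) := by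
  refine Fintype.exists_perm_of_map_univ_eq hB.eigenvalues (f ∘ hA.eigenvalues) ?_
  have hroots := hB.roots_charpoly_eq_eigenvalues
  rw [hA.charpoly_cfc_eq, roots_prod _ _ (Finset.prod_ne_zero_iff.2 fun i _ => X_sub_C_ne_zero _)]
    at hroots
  simp only [roots_X_sub_C, Multiset.bind_singleton] at hroots
  apply Multiset.map_injective (RCLike.ofReal_injective (K := 𝕜))
  simpa only [Multiset.map_map, Function.comp_def] using hroots.symm

end IsHermitian

end Matrix

theorem rotated_hessian_arctan_shift {n : ℕ} (α : ℝ) (hα : α ∈ Set.Ioo 0 (Real.pi / 2))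
    (A : Matrix (Fin n) (Fin n) ℝ) (hA : A.IsHermitian)
    (hlow : (A + (Real.cos α / Real.sin α) • (1 : Matrix (Fin n) (Fin n) ℝ)).PosDef)
    (Abar : Matrix (Fin n) (Fin n) ℝ)
    (hAbar : Abar = (Real.cos α • A - Real.sin α • 1) *
      (Real.cos α • (1 : Matrix (Fin n) (Fin n) ℝ) + Real.sin α • A)⁻¹)
    (hAbarH : Abar.IsHermitian) (Θ : ℝ) :
    (∃ σ : Equiv.Perm (Fin n), ∀ i,
        Real.arctan (hAbarH.eigenvalues i) = Real.arctan (hA.eigenvalues (σ i)) - α) ∧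
      ((∑ i, Real.arctan (hA.eigenvalues i) = Θ) →
        ∑ i, Real.arctan (hAbarH.eigenvalues i) = Θ - n * α) := by
  obtain ⟨hα0, hαπ⟩ := hα
  have hs : 0 < Real.sin α := Real.sin_pos_of_pos_of_lt_pi hα0 (by linarith [Real.pi_pos])
  have hpos : ∀ x ∈ spectrum ℝ A, 0 < Real.cos α + Real.sin α * x := fun x hx => by
    have := mul_pos hs (hlow.add_pos_of_mem_spectrum hx)
    rwa [mul_add, mul_div_cancel₀ _ hs.ne', add_comm] at this
  rw [← hA.cfc_sub_div_add fun x hx => (hpos x hx).ne'] at hAbar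
  subst hAbar
  obtain ⟨σ, hσ⟩ := hA.exists_perm_eigenvalues_cfc _ hAbarH
  have hshift : ∀ i, Real.arctan (hAbarH.eigenvalues i)
      = Real.arctan (hA.eigenvalues (σ i)) - α := fun i => by
    rw [hσ]
    exact Real.arctan_sub_eq_arctan_div ⟨by linarith, hαπ⟩
      (hpos _ (hA.eigenvalues_mem_spectrum_real _))
  refine ⟨⟨σ, hshift⟩, fun hsum => ?_⟩
  rw [Finset.sum_congr rfl fun i _ => hshift i, Finset.sum_sub_distrib,
    Equiv.sum_comp σ (fun i => Real.arctan (hA.eigenvalues i)), hsum, Finset.sum_const,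
    Finset.card_univ, Fintype.card_fin, nsmul_eq_mul]
end

section
/- Eigenvalue bound for the rotated Hessian: if A is a real symmetric n×n matrix with A ≥ (-cot α + δ)I for some δ > 0 and α ∈ (0, π/2), then the symmetric matrix Ā = (sin(α)I + cos(α)A)(cos(α)I + sin(α)A)^{-1} is well defined, and its eigenvalues satisfy -K(α, δ) ≤ λ̄ᵢ ≤ cot α for a constant K(α, δ) depending only on α and δ. For α = π/4 and δ = cot α = 1 (i.e. A ≥ 0), one gets -I ≤ Ā ≤ I. -/
/-!
With `c = cos α`, `s = sin α` and `B = c + s A`, the identity `c² + s² = 1` gives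
`Ā = (c A - s) B⁻¹ = c / s - s⁻¹ B⁻¹`. The hypothesis on `A` says `B ≥ s δ > 0`, so `B` is positive
definite and `0 ≤ B⁻¹ ≤ (s δ)⁻¹`; hence `c / s - (s² δ)⁻¹ ≤ Ā ≤ c / s`.
-/

open Real
open scoped MatrixOrder ComplexOrder

namespace Matrix

variable {𝕜 n : Type*} [RCLike 𝕜] [DecidableEq n] {A B : Matrix n n 𝕜} {c s t : ℝ}

theorem posDef_of_smul_one_le (ht : 0 < t) (h : t • 1 ≤ B) : B.PosDef := by
  simpa using (PosDef.one.smul ht).posSemidef_add h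

variable [Fintype n]

theorem inv_le_smul_one_of_smul_one_le (ht : 0 < t) (h : t • 1 ≤ B) : B⁻¹ ≤ t⁻¹ • 1 := by
  have hB := posDef_of_smul_one_le ht h
  have hdet := (isUnit_iff_isUnit_det B).mp hB.isUnit
  set C := B - t • 1
  have hC : C.PosSemidef := h
  have hBC : Cᴴ * C + t • C = B * C := by
    rw [hC.isHermitian.eq]
    simp only [C, sub_mul, mul_sub, smul_mul_assoc, mul_smul_comm, mul_one, one_mul, smul_sub]
    abel
  have hinv : t⁻¹ • 1 - B⁻¹ = t⁻¹ • ((B⁻¹)ᴴ * (Cᴴ * C + t • C) * B⁻¹) := by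
    rw [hBC, hB.isHermitian.inv.eq, ← mul_assoc, nonsing_inv_mul B hdet, one_mul, sub_mul,
      smul_mul_assoc, one_mul, mul_nonsing_inv B hdet, smul_sub, smul_smul,
      inv_mul_cancel₀ ht.ne', one_smul]
  rw [le_iff, hinv]
  exact (((posSemidef_conjTranspose_mul_self C).add (hC.smul ht.le)).conjTranspose_mul_mul_same
    _).smul (inv_nonneg.mpr ht.le)

/-- `Ā = (c A - s) (c + s A)⁻¹`, with eigenvalues `(c λ - s) / (c + s λ)` for those `λ` of `A`. -/
noncomputable def rotated (c s : ℝ) (A : Matrix n n 𝕜) : Matrix n n 𝕜 :=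
  (c • A - s • 1) * (c • 1 + s • A)⁻¹

theorem rotated_eq (hcs : c ^ 2 + s ^ 2 = 1) (hs : s ≠ 0) (hB : IsUnit (c • 1 + s • A)) :
    rotated c s A = (c / s) • 1 - s⁻¹ • (c • 1 + s • A)⁻¹ := by
  have hA : c • A - s • 1 = (c / s) • (c • 1 + s • A) - s⁻¹ • 1 := by
    match_scalars
    · field_simp
    · field_simp
      linear_combination -hcs
  rw [rotated, hA, sub_mul, smul_mul_assoc, smul_mul_assoc, one_mul,
    mul_nonsing_inv _ ((isUnit_iff_isUnit_det _).mp hB)]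

theorem rotated_le (hcs : c ^ 2 + s ^ 2 = 1) (hs : 0 < s) (hB : (c • 1 + s • A).PosDef) :
    rotated c s A ≤ (c / s) • 1 := by
  rw [rotated_eq hcs hs.ne' hB.isUnit, sub_le_self_iff]
  exact smul_nonneg (inv_nonneg.mpr hs.le) (nonneg_iff_posSemidef.mpr hB.inv.posSemidef)

theorem le_rotated (hcs : c ^ 2 + s ^ 2 = 1) (hs : 0 < s) (ht : 0 < t)
    (h : t • 1 ≤ c • 1 + s • A) : (c / s - (s * t)⁻¹) • 1 ≤ rotated c s A := by
  rw [rotated_eq hcs hs.ne' (posDef_of_smul_one_le ht h).isUnit, sub_smul, mul_inv, mul_smul]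
  exact sub_le_sub_left (smul_le_smul_of_nonneg_left (inv_le_smul_one_of_smul_one_le ht h)
    (inv_nonneg.mpr hs.le)) _

theorem rotated_angle_bounds {α δ : ℝ} (hs : 0 < sin α) (hδ : 0 < δ)
    (hA : (A + (cos α / sin α - δ) • 1).PosSemidef) :
    IsUnit (cos α • 1 + sin α • A) ∧ rotated (cos α) (sin α) A ≤ (cos α / sin α) • 1 ∧
      (cos α / sin α - (sin α ^ 2 * δ)⁻¹) • 1 ≤ rotated (cos α) (sin α) A := by
  have hB : (sin α * δ) • 1 ≤ cos α • 1 + sin α • A := by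
    have hsub : cos α • 1 + sin α • A - (sin α * δ) • 1 =
        sin α • (A + (cos α / sin α - δ) • 1) := by
      match_scalars <;> field_simp
    rw [le_iff, hsub]
    exact hA.smul hs.le
  have hcs := cos_sq_add_sin_sq α
  have hBpos := posDef_of_smul_one_le (by positivity) hB
  refine ⟨hBpos.isUnit, rotated_le hcs hs hBpos, ?_⟩
  simpa only [sq, mul_assoc] using le_rotated hcs hs (by positivity) hB

end Matrix

theorem rotated_hessian_eigenvalue_bound (α δ : ℝ) (hα : α ∈ Set.Ioo 0 (π / 2)) (hδ : 0 < δ) :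
    (∃ K : ℝ, ∀ (n : ℕ) (A : Matrix (Fin n) (Fin n) ℝ), A.IsHermitian →
      (A + (cos α / sin α - δ) • (1 : Matrix (Fin n) (Fin n) ℝ)).PosSemidef →
      IsUnit (cos α • (1 : Matrix (Fin n) (Fin n) ℝ) + sin α • A) ∧
        ((cos α / sin α) • (1 : Matrix (Fin n) (Fin n) ℝ) -
          (cos α • A - sin α • 1) * (cos α • 1 + sin α • A)⁻¹).PosSemidef ∧
        ((cos α • A - sin α • 1) * (cos α • 1 + sin α • A)⁻¹ +
          K • (1 : Matrix (Fin n) (Fin n) ℝ)).PosSemidef) ∧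
    (∀ (n : ℕ) (A : Matrix (Fin n) (Fin n) ℝ), A.IsHermitian → A.PosSemidef →
      ((1 : Matrix (Fin n) (Fin n) ℝ) -
        (cos (π / 4) • A - sin (π / 4) • 1) * (cos (π / 4) • 1 + sin (π / 4) • A)⁻¹).PosSemidef ∧
      ((cos (π / 4) • A - sin (π / 4) • 1) * (cos (π / 4) • 1 + sin (π / 4) • A)⁻¹ +
        (1 : Matrix (Fin n) (Fin n) ℝ)).PosSemidef) := by
  have hs : 0 < sin α := sin_pos_of_pos_of_lt_pi hα.1 (by linarith [hα.2, pi_pos])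
  refine ⟨⟨(sin α ^ 2 * δ)⁻¹ - cos α / sin α, fun n A _ hA => ?_⟩, fun n A _ hA => ?_⟩
  · obtain ⟨hB, hle, hge⟩ := Matrix.rotated_angle_bounds hs hδ hA
    refine ⟨hB, hle, ?_⟩
    rwa [Matrix.le_iff, sub_eq_add_neg, ← neg_smul, neg_sub] at hge
  · have hcot : cos (π / 4) / sin (π / 4) = 1 := by
      rw [cos_pi_div_four, sin_pi_div_four, div_self]; positivity
    have hs4 : 0 < sin (π / 4) := by rw [sin_pi_div_four]; positivity
    have hK : 1 - (sin (π / 4) ^ 2 * 1)⁻¹ = -1 := by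
      rw [sin_pi_div_four, div_pow, sq_sqrt zero_le_two]; norm_num
    obtain ⟨-, hle, hge⟩ := Matrix.rotated_angle_bounds (A := A) hs4 one_pos
      (by rwa [hcot, sub_self, zero_smul, add_zero])
    rw [hcot, one_smul] at hle
    rw [hcot, hK, neg_one_smul] at hge
    exact ⟨hle, by rwa [Matrix.le_iff, sub_neg_eq_add] at hge⟩
end

section
/- Concavity of the special Lagrangian operator on convex matrices: the function F(A) = Σᵢ arctan λᵢ(A) is concave on the set of positive semidefinite symmetric n×n matrices. -/
noncomputable def sLagOp {n : ℕ} (A : Matrix (Fin n) (Fin n) ℝ) : ℝ :=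
  if h : A.IsHermitian then ∑ i, Real.arctan (h.eigenvalues i) else 0

/-!
The diagonal entries `⟪uᵢ, A uᵢ⟫` of a symmetric matrix `A` in an orthonormal basis `u` are
averages of its eigenvalues `λⱼ` with the doubly stochastic weights `⟪vⱼ, uᵢ⟫²`, `v` an eigenbasis.
Jensen's inequality, row by row, gives `∑ f (λⱼ) ≤ ∑ f ⟪uᵢ, A uᵢ⟫` for every concave `f`, with
equality when `u = v`. Taking for `u` an eigenbasis of `t A + (1 - t) B`, whose diagonal entries
are `t ⟪uᵢ, A uᵢ⟫ + (1 - t) ⟪uᵢ, B uᵢ⟫`, concavity of `f` on each entry gives concavity of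
`A ↦ ∑ f (λⱼ A)`; finally `arctan` is concave on `[0, ∞)`, which contains the spectrum of a
positive semidefinite matrix.
-/

open Matrix
open scoped RealInnerProductSpace

theorem Real.concaveOn_arctan_Ici : ConcaveOn ℝ (Set.Ici 0) Real.arctan := by
  refine AntitoneOn.concaveOn_of_deriv (convex_Ici 0) Real.continuous_arctan.continuousOn
    Real.differentiable_arctan.differentiableOn ?_
  rw [interior_Ici, Real.deriv_arctan]
  intro x hx y _ hxy
  have hx₀ : 0 ≤ x := hx.le
  dsimp only
  gcongr

namespace Matrix.IsHermitian

variable {ι : Type*} [Fintype ι] [DecidableEq ι] {A : Matrix ι ι ℝ} (hA : A.IsHermitian)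

lemma toEuclideanLin_eigenvectorBasis (j : ι) :
    toEuclideanLin A (hA.eigenvectorBasis j) = hA.eigenvalues j • hA.eigenvectorBasis j := by
  rw [toLpLin_apply, hA.mulVec_eigenvectorBasis]
  rfl

lemma inner_eigenvectorBasis_toEuclideanLin (j : ι) :
    ⟪hA.eigenvectorBasis j, toEuclideanLin A (hA.eigenvectorBasis j)⟫ = hA.eigenvalues j := by
  rw [toEuclideanLin_eigenvectorBasis, real_inner_smul_right, hA.eigenvectorBasis.inner_eq_one,
    mul_one]

lemma inner_toEuclideanLin_self_eq_sum (x : EuclideanSpace ℝ ι) :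
    ⟪x, toEuclideanLin A x⟫ = ∑ j, ⟪hA.eigenvectorBasis j, x⟫ ^ 2 * hA.eigenvalues j := by
  have hAx : toEuclideanLin A x =
      ∑ j, (⟪hA.eigenvectorBasis j, x⟫ * hA.eigenvalues j) • hA.eigenvectorBasis j := by
    conv_lhs => rw [← hA.eigenvectorBasis.sum_repr' x]
    simp only [map_sum, _root_.map_smul, toEuclideanLin_eigenvectorBasis, smul_smul]
  rw [hAx, inner_sum]
  refine Finset.sum_congr rfl fun j _ => ?_
  rw [real_inner_smul_right, real_inner_comm x]
  ring

lemma inner_toEuclideanLin_self_mem {s : Set ℝ} (hs : Convex ℝ s)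
    (hAs : ∀ j, hA.eigenvalues j ∈ s) {x : EuclideanSpace ℝ ι} (hx : ‖x‖ = 1) :
    ⟪x, toEuclideanLin A x⟫ ∈ s := by
  rw [hA.inner_toEuclideanLin_self_eq_sum]
  refine hs.sum_mem (fun j _ => sq_nonneg _) ?_ fun j _ => hAs j
  rw [hA.eigenvectorBasis.sum_sq_inner_right, hx, one_pow]

theorem sum_map_eigenvalues_le {s : Set ℝ} {f : ℝ → ℝ} (hf : ConcaveOn ℝ s f)
    (hAs : ∀ j, hA.eigenvalues j ∈ s) (u : OrthonormalBasis ι ℝ (EuclideanSpace ℝ ι)) :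
    ∑ j, f (hA.eigenvalues j) ≤ ∑ i, f ⟪u i, toEuclideanLin A (u i)⟫ := by
  let v := hA.eigenvectorBasis
  calc ∑ j, f (hA.eigenvalues j)
      = ∑ j, (∑ i, ⟪v j, u i⟫ ^ 2) * f (hA.eigenvalues j) := by
        simp only [u.sum_sq_inner_left, v.orthonormal.1, one_pow, one_mul]
    _ = ∑ i, ∑ j, ⟪v j, u i⟫ ^ 2 • f (hA.eigenvalues j) := by
        simp only [Finset.sum_mul, smul_eq_mul]
        exact Finset.sum_comm
    _ ≤ ∑ i, f (∑ j, ⟪v j, u i⟫ ^ 2 • hA.eigenvalues j) := by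
        refine Finset.sum_le_sum fun i _ => hf.le_map_sum (fun j _ => sq_nonneg _) ?_
          fun j _ => hAs j
        rw [v.sum_sq_inner_right, u.orthonormal.1, one_pow]
    _ = ∑ i, f ⟪u i, toEuclideanLin A (u i)⟫ := by
        simp only [hA.inner_toEuclideanLin_self_eq_sum, smul_eq_mul, v]

end Matrix.IsHermitian

theorem ConcaveOn.sum_map_eigenvalues {ι : Type*} [Fintype ι] [DecidableEq ι] {s : Set ℝ}
    {f : ℝ → ℝ} (hf : ConcaveOn ℝ s f) {A B : Matrix ι ι ℝ} (hA : A.IsHermitian)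
    (hB : B.IsHermitian) (hAs : ∀ j, hA.eigenvalues j ∈ s) (hBs : ∀ j, hB.eigenvalues j ∈ s)
    {t : ℝ} (ht₀ : 0 ≤ t) (ht₁ : t ≤ 1) (hC : (t • A + (1 - t) • B).IsHermitian) :
    t * ∑ j, f (hA.eigenvalues j) + (1 - t) * ∑ j, f (hB.eigenvalues j) ≤
      ∑ j, f (hC.eigenvalues j) := by
  set u := hC.eigenvectorBasis
  have hu : ∀ i, ‖u i‖ = 1 := u.orthonormal.1
  calc t * ∑ j, f (hA.eigenvalues j) + (1 - t) * ∑ j, f (hB.eigenvalues j)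
      ≤ t * ∑ i, f ⟪u i, toEuclideanLin A (u i)⟫
          + (1 - t) * ∑ i, f ⟪u i, toEuclideanLin B (u i)⟫ :=
        add_le_add (mul_le_mul_of_nonneg_left (hA.sum_map_eigenvalues_le hf hAs u) ht₀)
          (mul_le_mul_of_nonneg_left (hB.sum_map_eigenvalues_le hf hBs u) (sub_nonneg.2 ht₁))
    _ = ∑ i, (t * f ⟪u i, toEuclideanLin A (u i)⟫
          + (1 - t) * f ⟪u i, toEuclideanLin B (u i)⟫) := by
        rw [Finset.sum_add_distrib, Finset.mul_sum, Finset.mul_sum]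
    _ ≤ ∑ i, f (t * ⟪u i, toEuclideanLin A (u i)⟫ + (1 - t) * ⟪u i, toEuclideanLin B (u i)⟫) :=
        Finset.sum_le_sum fun i _ => hf.2 (hA.inner_toEuclideanLin_self_mem hf.1 hAs (hu i))
          (hB.inner_toEuclideanLin_self_mem hf.1 hBs (hu i)) ht₀ (by linarith) (by ring)
    _ = ∑ j, f (hC.eigenvalues j) := by
        refine Finset.sum_congr rfl fun i _ => ?_
        rw [← hC.inner_eigenvectorBasis_toEuclideanLin]
        simp only [map_add, _root_.map_smul, LinearMap.add_apply, LinearMap.smul_apply,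
          inner_add_right, real_inner_smul_right, u]

theorem sLag_concave_on_psd {n : ℕ} (A B : Matrix (Fin n) (Fin n) ℝ)
    (hA : A.PosSemidef) (hB : B.PosSemidef) (t : ℝ) (ht : t ∈ Set.Icc (0 : ℝ) 1) :
    t * sLagOp A + (1 - t) * sLagOp B ≤ sLagOp (t • A + (1 - t) • B) := by
  obtain ⟨ht₀, ht₁⟩ := ht
  have hC : (t • A + (1 - t) • B).PosSemidef := (hA.smul ht₀).add (hB.smul (sub_nonneg.2 ht₁))
  rw [sLagOp, sLagOp, sLagOp, dif_pos hA.1, dif_pos hB.1, dif_pos hC.1]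
  exact Real.concaveOn_arctan_Ici.sum_map_eigenvalues hA.1 hB.1 hA.eigenvalues_nonneg
    hB.eigenvalues_nonneg ht₀ ht₁ hC.1
end
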